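/- arXiv:math/0608433 — 2 statements merged into one kernel-verified Lean document; each statement's English description precedes it below -/
import Mathlib

section
/- Let G be an abelian group and P, Q, R nonempty subsets of G satisfying: P ⊆ Hom(Q, -R), Q ⊆ Hom(R, -P), and R ⊆ Hom(P, -Q). Then P - P ⊆ Hom(Q,Q), Q - Q ⊆ Hom(R,R), and R - R ⊆ Hom(P,P). -/
open Pointwise

def Hm {G : Type*} [AddCommGroup G] (P Q : Set G) : Set G := {g | ∀ a ∈ P, a + g ∈ Q}

lemma aux {G : Type*} [AddCommGroup G] (P Q R : Set G)
    (h1 : P ⊆ Hm Q (-R)) (h3 : R ⊆ Hm P (-Q)) : P - P ⊆ Hm Q Q := by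
  rintro x ⟨p, hp, p', hp', rfl⟩ q hq
  have h := h1 hp q hq
  rw [Set.mem_neg] at h
  have h' := h3 h p' hp'
  rw [Set.mem_neg] at h'
  have : q + (p - p') = -(p' + -(q + p)) := by abel
  rwa [this]

theorem stmt4 {G : Type*} [AddCommGroup G] (P Q R : Set G)
    (hP : P.Nonempty) (hQ : Q.Nonempty) (hR : R.Nonempty)
    (h1 : P ⊆ Hm Q (-R)) (h2 : Q ⊆ Hm R (-P)) (h3 : R ⊆ Hm P (-Q)) :
    P - P ⊆ Hm Q Q ∧ Q - Q ⊆ Hm R R ∧ R - R ⊆ Hm P P :=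
  ⟨aux P Q R h1 h3, aux Q R P h2 h1, aux R P Q h3 h2⟩
end

section
/- Let G be an abelian group and P, Q, R nonempty subsets of G such that for all a ∈ P, b ∈ Q, c ∈ R: a + b ∈ -R, b + c ∈ -P, and c + a ∈ -Q. Assume moreover Hom(P,P) ⊆ P - P, Hom(Q,Q) ⊆ Q - Q, and Hom(R,R) ⊆ R - R. Then P - P = Q - Q = R - R = Hom(P,P) = Hom(Q,Q) = Hom(R,R). -/
open Pointwise

theorem stmt5 {G : Type*} [AddCommGroup G] (P Q R : Set G)
    (hP : P.Nonempty) (hQ : Q.Nonempty) (hR : R.Nonempty)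
    (h1 : ∀ a ∈ P, ∀ b ∈ Q, a + b ∈ -R)
    (h2 : ∀ b ∈ Q, ∀ c ∈ R, b + c ∈ -P)
    (h3 : ∀ c ∈ R, ∀ a ∈ P, c + a ∈ -Q)
    (hp : Hm P P ⊆ P - P) (hq : Hm Q Q ⊆ Q - Q) (hr : Hm R R ⊆ R - R) :
    P - P = Q - Q ∧ Q - Q = R - R ∧ R - R = Hm P P ∧
      Hm P P = Hm Q Q ∧ Hm Q Q = Hm R R := by
  have key : ∀ (P Q R : Set G),
      (∀ a ∈ P, ∀ b ∈ Q, a + b ∈ -R) →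
      (∀ c ∈ R, ∀ a ∈ P, c + a ∈ -Q) →
      P - P ⊆ Hm Q Q := by
    intro P Q R h1 h3 x hx
    rw [Set.mem_sub] at hx
    obtain ⟨a, ha, a', ha', rfl⟩ := hx
    intro b hb
    have hc : -(a + b) ∈ R := h1 a ha b hb
    have h := h3 _ hc a' ha'
    rw [Set.mem_neg] at h
    have : b + (a - a') = -(-(a + b) + a') := by abel
    rwa [this]
  have hPQ : P - P ⊆ Hm Q Q := key P Q R h1 h3
  have hQR : Q - Q ⊆ Hm R R := key Q R P h2 h1
  have hRP : R - R ⊆ Hm P P := key R P Q h3 h2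
  have e1 : P - P = Q - Q := subset_antisymm (hPQ.trans hq)
    ((hQR.trans hr).trans (hRP.trans hp))
  have e2 : Q - Q = R - R := subset_antisymm (hQR.trans hr)
    ((hRP.trans hp).trans (hPQ.trans hq))
  have e3 : R - R = Hm P P := subset_antisymm hRP
    (hp.trans ((hPQ.trans (hq.trans hQR)).trans hr))
  have e4 : Hm P P = Hm Q Q := subset_antisymm (hp.trans hPQ)
    (hq.trans (hQR.trans (hr.trans hRP)))
  have e5 : Hm Q Q = Hm R R := subset_antisymm (hq.trans hQR)
    (hr.trans (hRP.trans (hp.trans hPQ)))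
  exact ⟨e1, e2, e3, e4, e5⟩
end
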